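/- arXiv:2602.12237 — 4 statements merged into one kernel-verified Lean document; each statement's English description precedes it below -/
import Mathlib

section
/- Let S and S' be convex subsets of ℝ^d, let h : ℝ^d → ℝ be differentiable and μ₁-strongly convex on S with μ₁ > 0, and let h' : ℝ^d → ℝ be differentiable on S'. Let p₁ be a minimizer of h over S and p₁' a minimizer of h' over S', and assume mutual feasibility: p₁ ∈ S' and p₁' ∈ S. Then ‖p₁ − p₁'‖ ≤ (1/μ₁) · ‖∇h(p₁') − ∇h'(p₁')‖ (Lemma 'Argmin stability with mutual feasibility'). -/
open scoped RealInnerProductSpace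

lemma first_order_opt {d : ℕ} {S : Set (EuclideanSpace ℝ (Fin d))}
    (hS : Convex ℝ S) {f : EuclideanSpace ℝ (Fin d) → ℝ}
    {a y : EuclideanSpace ℝ (Fin d)} (ha : a ∈ S) (hy : y ∈ S)
    (hf : DifferentiableAt ℝ f a) (hmin : IsMinOn f S a) :
    0 ≤ ⟪gradient f a, y - a⟫ := by
  have hfd : HasFDerivWithinAt f
      ((InnerProductSpace.toDual ℝ _) (gradient f a) : _ →L[ℝ] ℝ) S a :=
    hf.hasGradientAt.hasFDerivAt.hasFDerivWithinAt
  have hcone : y - a ∈ posTangentConeAt S a :=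
    sub_mem_posTangentConeAt_of_segment_subset (hS.segment_subset ha hy)
  have hloc : IsLocalMinOn f S a :=
    hmin.filter_mono (Filter.le_principal_iff.2 self_mem_nhdsWithin)
  have := hloc.hasFDerivWithinAt_nonneg hfd hcone
  simpa [InnerProductSpace.toDual_apply_apply] using this

/-- **Lemma (Argmin stability with mutual feasibility).**
Let `S` and `S'` be convex subsets of `ℝ^d`, let `h` be differentiable and `μ₁`-strongly
convex on `S` (with `μ₁ > 0`), and let `h'` be differentiable on `S'`.  Let `p₁` minimize
`h` over `S` and `p₁'` minimize `h'` over `S'`, and assume mutual feasibility: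
`p₁ ∈ S'` and `p₁' ∈ S`.  Then `‖p₁ − p₁'‖ ≤ (1/μ₁) · ‖∇h(p₁') − ∇h'(p₁')‖`. -/
theorem argmin_stability_with_mutual_feasibility
    {d : ℕ} {S S' : Set (EuclideanSpace ℝ (Fin d))}
    (hS : Convex ℝ S) (hS' : Convex ℝ S')
    {h h' : EuclideanSpace ℝ (Fin d) → ℝ} {μ₁ : ℝ} (hμ₁ : 0 < μ₁)
    (hdiff : ∀ x ∈ S, DifferentiableAt ℝ h x)
    (hdiff' : ∀ x ∈ S', DifferentiableAt ℝ h' x)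
    (hsc : ∀ x ∈ S, ∀ y ∈ S,
      h x + ⟪gradient h x, y - x⟫ + μ₁ / 2 * ‖y - x‖ ^ 2 ≤ h y)
    {p₁ p₁' : EuclideanSpace ℝ (Fin d)}
    (hp₁ : p₁ ∈ S) (hmin : IsMinOn h S p₁)
    (hp₁' : p₁' ∈ S') (hmin' : IsMinOn h' S' p₁')
    (hfeas : p₁ ∈ S') (hfeas' : p₁' ∈ S) :
    ‖p₁ - p₁'‖ ≤ (1 / μ₁) * ‖gradient h p₁' - gradient h' p₁'‖ := by
  set r := ‖p₁ - p₁'‖ with hr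
  -- first-order optimality of h at p₁ in direction p₁'
  have h1 : 0 ≤ ⟪gradient h p₁, p₁' - p₁⟫ :=
    first_order_opt hS hp₁ hfeas' (hdiff _ hp₁) hmin
  -- first-order optimality of h' at p₁' in direction p₁
  have h2 : 0 ≤ ⟪gradient h' p₁', p₁ - p₁'⟫ :=
    first_order_opt hS' hp₁' hfeas (hdiff' _ hp₁') hmin'
  -- strong convexity at p₁ towards p₁'
  have h3 := hsc p₁ hp₁ p₁' hfeas'
  -- strong convexity at p₁' towards p₁
  have h4 := hsc p₁' hfeas' p₁ hp₁
  have hrr : ‖p₁' - p₁‖ = r := by rw [hr, norm_sub_rev]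
  rw [hrr] at h3
  -- h p₁ + μ/2 r^2 ≤ h p₁'
  have h5 : h p₁ + μ₁ / 2 * r ^ 2 ≤ h p₁' := by nlinarith
  have h6 : ⟪gradient h p₁', p₁ - p₁'⟫ ≤ -(μ₁ * r ^ 2) := by nlinarith
  have h7 : μ₁ * r ^ 2 ≤ ⟪gradient h' p₁' - gradient h p₁', p₁ - p₁'⟫ := by
    rw [inner_sub_left]; linarith
  have h8 : ⟪gradient h' p₁' - gradient h p₁', p₁ - p₁'⟫ ≤
      ‖gradient h p₁' - gradient h' p₁'‖ * r := by
    calc _ ≤ ‖gradient h' p₁' - gradient h p₁'‖ * ‖p₁ - p₁'‖ :=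
          real_inner_le_norm _ _
      _ = ‖gradient h p₁' - gradient h' p₁'‖ * r := by rw [norm_sub_rev]
  have hr0 : 0 ≤ r := norm_nonneg _
  rcases eq_or_lt_of_le hr0 with h0 | h0
  · rw [← h0]; positivity
  · have : μ₁ * r ^ 2 ≤ ‖gradient h p₁' - gradient h' p₁'‖ * r := le_trans h7 h8
    rw [div_mul_eq_mul_div, le_div_iff₀ hμ₁]
    nlinarith
end

section
/- Let F : ℝ^d × ℝ^k → ℝ be such that for each p₁ the map r ↦ F(r, p₁) is differentiable and μ-strongly convex (μ > 0) on a convex set S(p₁) ⊆ ℝ^d, and such that for the fixed point r' below the map p ↦ ∇_r F(r', p) is continuously differentiable on the segment joining p₁ and p₁'. Let r = r*(p₁) minimize F(·, p₁) over S(p₁) and r' = r*(p₁') minimize F(·, p₁') over S(p₁'), and assume mutual feasibility: r' ∈ S(p₁) and r ∈ S(p₁'). Set Δ := p₁' − p₁ and Δr := r*(p₁') − r*(p₁). Then ‖Δr‖ ≤ (M/μ)·‖Δ‖, where M := sup_{t∈[0,1]} ‖∇²_{r,p₁} F(r*(p₁'), p₁^t)‖ and p₁^t := t·p₁' + (1−t)·p₁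 (Lemma 'Behavior of r*(·) under changes in p₁'). -/
/-!
Write `f = F(·, p₁)`, `g = F(·, p₁')` and `G p = ∇_r F(r', p)`. Adding the two strong convexity
inequalities of `f` at `r` and `r'` gives `μ‖r' - r‖² ≤ ⟪∇f r' - ∇f r, r' - r⟫`. The first-order
optimality conditions `⟪∇f r, r' - r⟫ ≥ 0` and `⟪∇g r', r - r'⟫ ≥ 0`, both available by mutual
feasibility, bound this by `⟪G p₁ - G p₁', r' - r⟫`, hence `μ‖r' - r‖ ≤ ‖G p₁' - G p₁‖` by
Cauchy–Schwarz, and the mean value inequality along the segment `[p₁, p₁']` finishes the proof.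
-/

open scoped RealInnerProductSpace

section Gradient

variable {E : Type*} [NormedAddCommGroup E] [InnerProductSpace ℝ E] [CompleteSpace E]

theorem IsMinOn.inner_gradient_sub_nonneg {f : E → ℝ} {S : Set E} {x y : E}
    (hmin : IsMinOn f S x) (hS : Convex ℝ S) (hx : x ∈ S) (hy : y ∈ S)
    (hf : DifferentiableAt ℝ f x) :
    0 ≤ ⟪gradient f x, y - x⟫ := by
  have hcone : y - x ∈ posTangentConeAt S x :=
    sub_mem_posTangentConeAt_of_segment_subset (hS.segment_subset hx hy)
  have hderiv := hasGradientAt_iff_hasFDerivAt.mp hf.hasGradientAt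
  simpa using hmin.localize.hasFDerivWithinAt_nonneg hderiv.hasFDerivWithinAt hcone

theorem mul_norm_sub_sq_le_inner_gradient_sub {f : E → ℝ} {μ : ℝ} {x y : E}
    (hxy : f x + ⟪gradient f x, y - x⟫ + μ / 2 * ‖y - x‖ ^ 2 ≤ f y)
    (hyx : f y + ⟪gradient f y, x - y⟫ + μ / 2 * ‖x - y‖ ^ 2 ≤ f x) :
    μ * ‖y - x‖ ^ 2 ≤ ⟪gradient f y - gradient f x, y - x⟫ := by
  rw [norm_sub_rev x y, ← neg_sub y x, inner_neg_right] at hyx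
  rw [inner_sub_left]
  linarith

theorem IsMinOn.mul_norm_sub_le_norm_gradient_sub {f g : E → ℝ} {S T : Set E} {μ : ℝ} {x y : E}
    (hS : Convex ℝ S) (hT : Convex ℝ T)
    (hsc : ∀ a ∈ S, ∀ b ∈ S, f a + ⟪gradient f a, b - a⟫ + μ / 2 * ‖b - a‖ ^ 2 ≤ f b)
    (hx : x ∈ S) (hminf : IsMinOn f S x) (hf : DifferentiableAt ℝ f x)
    (hy : y ∈ T) (hming : IsMinOn g T y) (hg : DifferentiableAt ℝ g y)
    (hyS : y ∈ S) (hxT : x ∈ T) :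
    μ * ‖y - x‖ ≤ ‖gradient f y - gradient g y‖ := by
  have hfoc_f := hminf.inner_gradient_sub_nonneg hS hx hyS hf
  have hfoc_g := hming.inner_gradient_sub_nonneg hT hy hxT hg
  rw [← neg_sub y x, inner_neg_right] at hfoc_g
  have hsq : μ * ‖y - x‖ ^ 2 ≤ ‖gradient f y - gradient g y‖ * ‖y - x‖ :=
    calc μ * ‖y - x‖ ^ 2 ≤ ⟪gradient f y - gradient f x, y - x⟫ :=
          mul_norm_sub_sq_le_inner_gradient_sub (hsc x hx y hyS) (hsc y hyS x hx)
      _ ≤ ⟪gradient f y - gradient g y, y - x⟫ := by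
          rw [inner_sub_left, inner_sub_left]; linarith
      _ ≤ ‖gradient f y - gradient g y‖ * ‖y - x‖ := real_inner_le_norm _ _
  rcases (norm_nonneg (y - x)).eq_or_lt with h0 | hpos
  · rw [← h0, mul_zero]
    exact norm_nonneg _
  · exact le_of_mul_le_mul_right (by linarith) hpos

end Gradient

section MeanValue

variable {E F : Type*} [NormedAddCommGroup E] [NormedSpace ℝ E]
  [NormedAddCommGroup F] [NormedSpace ℝ F]

theorem mem_segment_iff_exists_Icc {a b x : E} :
    x ∈ segment ℝ a b ↔ ∃ t ∈ Set.Icc (0 : ℝ) 1, t • b + (1 - t) • a = x := by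
  simp only [segment_eq_image, Set.mem_image, add_comm]

theorem norm_sub_le_iSup_norm_fderiv_segment_mul {G : E → F} {a b : E}
    (hG : ∀ x ∈ segment ℝ a b, DifferentiableAt ℝ G x)
    (hG' : ContinuousOn (fderiv ℝ G) (segment ℝ a b)) :
    ‖G b - G a‖ ≤
      (⨆ t : Set.Icc (0 : ℝ) 1, ‖fderiv ℝ G ((t : ℝ) • b + (1 - (t : ℝ)) • a)‖) * ‖b - a‖ := by
  set φ : ℝ → E := fun t => t • b + (1 - t) • a
  have hφ : Set.MapsTo φ (Set.Icc 0 1) (segment ℝ a b) :=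
    fun t ht => mem_segment_iff_exists_Icc.mpr ⟨t, ht, rfl⟩
  have hcont : ContinuousOn (fun t => ‖fderiv ℝ G (φ t)‖) (Set.Icc 0 1) :=
    (hG'.comp (by fun_prop) hφ).norm
  have hbdd : BddAbove (Set.range fun t : Set.Icc (0 : ℝ) 1 => ‖fderiv ℝ G (φ t)‖) := by
    simpa only [Set.image_eq_range] using isCompact_Icc.bddAbove_image hcont
  have hbound : ∀ x ∈ segment ℝ a b,
      ‖fderiv ℝ G x‖ ≤ ⨆ t : Set.Icc (0 : ℝ) 1, ‖fderiv ℝ G (φ t)‖ := by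
    intro x hx
    obtain ⟨t, ht, rfl⟩ := mem_segment_iff_exists_Icc.mp hx
    exact le_ciSup hbdd ⟨t, ht⟩
  exact (convex_segment a b).norm_image_sub_le_of_norm_hasFDerivWithin_le
    (fun x hx => (hG x hx).hasFDerivAt.hasFDerivWithinAt) hbound
    (left_mem_segment ℝ a b) (right_mem_segment ℝ a b)

end MeanValue

/-- **Lemma (Behavior of `r*(·)` under changes in `p₁`).**
Suppose for each `p₁` the map `r ↦ F(r, p₁)` is differentiable and `μ`-strongly convex on a
convex set `S(p₁)`, and that `p ↦ ∇_r F(r*(p₁'), p)` is continuously differentiable on the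
segment joining `p₁` and `p₁'`.  If `r = r*(p₁)` minimizes `F(·, p₁)` over `S(p₁)`,
`r' = r*(p₁')` minimizes `F(·, p₁')` over `S(p₁')`, and mutual feasibility holds
(`r' ∈ S(p₁)` and `r ∈ S(p₁')`), then `‖Δr‖ ≤ (M/μ)·‖Δ‖`, where
`M = sup_{t∈[0,1]} ‖∇²_{r,p₁} F(r*(p₁'), p₁^t)‖` and `p₁^t = t·p₁' + (1−t)·p₁`. -/
theorem rstar_stability_under_p1_changes
    {d k : ℕ}
    {F : EuclideanSpace ℝ (Fin d) → EuclideanSpace ℝ (Fin k) → ℝ}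
    {S : EuclideanSpace ℝ (Fin k) → Set (EuclideanSpace ℝ (Fin d))}
    {μ : ℝ} (hμ : 0 < μ)
    (hSconv : ∀ p, Convex ℝ (S p))
    (hdiff : ∀ p, ∀ x ∈ S p, DifferentiableAt ℝ (fun s => F s p) x)
    (hsc : ∀ p, ∀ x ∈ S p, ∀ y ∈ S p,
      F x p + ⟪gradient (fun s => F s p) x, y - x⟫ + μ / 2 * ‖y - x‖ ^ 2 ≤ F y p)
    {p₁ p₁' : EuclideanSpace ℝ (Fin k)}
    {r r' : EuclideanSpace ℝ (Fin d)}
    (hr : r ∈ S p₁) (hmin : IsMinOn (fun s => F s p₁) (S p₁) r)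
    (hr' : r' ∈ S p₁') (hmin' : IsMinOn (fun s => F s p₁') (S p₁') r')
    (hfeas : r' ∈ S p₁) (hfeas' : r ∈ S p₁')
    (hG : ∀ x ∈ segment ℝ p₁ p₁',
      DifferentiableAt ℝ (fun p => gradient (fun s => F s p) r') x)
    (hGcont : ContinuousOn
      (fun x => fderiv ℝ (fun p => gradient (fun s => F s p) r') x) (segment ℝ p₁ p₁')) :
    ‖r' - r‖ ≤
      ((⨆ t : Set.Icc (0 : ℝ) 1,
          ‖fderiv ℝ (fun p => gradient (fun s => F s p) r')
            ((t : ℝ) • p₁' + (1 - (t : ℝ)) • p₁)‖) / μ) * ‖p₁' - p₁‖ := by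
  have hstab := hmin.mul_norm_sub_le_norm_gradient_sub (hSconv p₁) (hSconv p₁') (hsc p₁)
    hr (hdiff p₁ r hr) hr' hmin' (hdiff p₁' r' hr') hfeas hfeas'
  have hmvt := norm_sub_le_iSup_norm_fderiv_segment_mul hG hGcont
  rw [norm_sub_rev] at hmvt
  rw [div_mul_eq_mul_div, le_div_iff₀ hμ]
  linarith
end

section
/- In the bivariate log-linear setup, for any p₁ ∈ Δ^{d₁−1} and any minimizer r*(p₁) = (ρ*, b₂*) ∈ Δ^{d₂} of F(·, p₁) over a feasible subset of Δ^{d₂}, writing q*(p₁) := Φ_{p₁}(r*(p₁)), the gradient of F(r, p₁) in r = (ρ, b₂) at r*(p₁) satisfies ‖∇_r F(r*(p₁), p₁)‖ ≤ F̄(q*(p₁)) · ‖ |A₁ p₁| + α_comp ‖, where A₁ ∈ ℝ^{n×d₁} is the matrix whose i-th row is A_{i,1}, |A₁ p₁| ∈ ℝ^n is the componentwise absolute value of A₁ p₁, and ‖·‖ is the Euclidean norm on ℝ^n (Lemma bounding ‖∇_r F‖). -/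
noncomputable section
open scoped RealInnerProductSpace BigOperators

/-- Euclidean space `ℝ^m`. -/
abbrev Euc (m : ℕ) := EuclideanSpace ℝ (Fin m)

/-- Build a vector of `ℝ^m` from its coordinates. -/
def vecOf {m : ℕ} (f : Fin m → ℝ) : Euc m := (WithLp.equiv 2 _).symm f

/-- The probability simplex in `ℝ^m`. -/
def probSimplex (m : ℕ) : Set (Euc m) := {p | (∀ i, 0 ≤ p i) ∧ ∑ i, p i = 1}

/-- A point of the collapsed space `ℝ^{1+d₂}` from `(ρ, b₂)`; coordinate `0` is `ρ`. -/
def pairR {d₂ : ℕ} (ρ : ℝ) (b₂ : Fin d₂ → ℝ) : Euc (d₂ + 1) := vecOf (Fin.cons ρ b₂)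

/-- The collapsed simplex `Δ^{d₂} = {(ρ, b₂) : ρ ≥ 0, b₂ ≥ 0, ρ + Σ_j (b₂)_j = 1}`. -/
def collapsedSimplex (d₂ : ℕ) : Set (Euc (d₂ + 1)) := probSimplex (d₂ + 1)

/-- A point of the full space `ℝ^{d₁+d₂}` from its two blocks of coordinates. -/
def pairQ {d₁ d₂ : ℕ} (x : Fin d₁ → ℝ) (y : Fin d₂ → ℝ) : Euc (d₁ + d₂) :=
  vecOf (Fin.append x y)

/-- The expansion map `Φ_{p₁}(ρ, b₂) = (ρ·p₁, b₂)`. -/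
def Phi {d₁ d₂ : ℕ} (p₁ : Euc d₁) (r : Euc (d₂ + 1)) : Euc (d₁ + d₂) :=
  pairQ (fun j => r 0 * p₁ j) (fun j => r j.succ)

variable {n d₁ d₂ : ℕ}

/-- `⟨A_i, q⟩` where `A_i = (A_{i,1}, A_{i,2})`. -/
def innerA (A₁ : Fin n → Euc d₁) (A₂ : Fin n → Euc d₂) (i : Fin n) (q : Euc (d₁ + d₂)) : ℝ :=
  ⟪pairQ (A₁ i) (A₂ i), q⟫

/-- `F̄(q) = (1/n)·Σ_i exp(⟨A_i, q⟩)`. -/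
def Fbar (A₁ : Fin n → Euc d₁) (A₂ : Fin n → Euc d₂) (q : Euc (d₁ + d₂)) : ℝ :=
  (1 / (n : ℝ)) * ∑ i, Real.exp (innerA A₁ A₂ i q)

/-- `F(q) = (1/n)·Σ_i (c_i + exp(⟨A_i, q⟩))`. -/
def Ffull (c : Fin n → ℝ) (A₁ : Fin n → Euc d₁) (A₂ : Fin n → Euc d₂)
    (q : Euc (d₁ + d₂)) : ℝ :=
  (1 / (n : ℝ)) * ∑ i, (c i + Real.exp (innerA A₁ A₂ i q))

/-- The bivariate objective `F(r, p₁) := F(Φ_{p₁}(r))`. -/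
def Fb (c : Fin n → ℝ) (A₁ : Fin n → Euc d₁) (A₂ : Fin n → Euc d₂)
    (r : Euc (d₂ + 1)) (p₁ : Euc d₁) : ℝ :=
  Ffull c A₁ A₂ (Phi p₁ r)

/-! The objective is `r ↦ (1/n) Σ_i (c_i + exp ⟪w_i, r⟫)` with `w_i = (⟪A_{i,1}, p₁⟫, A_{i,2})`,
because `Φ_{p₁}` is linear. Its gradient `(1/n) Σ_i exp ⟪w_i, r⟫ • w_i` is a nonnegative
combination of the `w_i`, and `‖w_i‖ ≤ |⟪A_{i,1}, p₁⟫| + ‖A_{i,2}‖` is a coordinate of the vector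
`|A₁ p₁| + α_comp`, so the triangle inequality bounds the gradient at every `r`. -/

lemma innerA_Phi (A₁ : Fin n → Euc d₁) (A₂ : Fin n → Euc d₂) (p₁ : Euc d₁) (i : Fin n)
    (r : Euc (d₂ + 1)) :
    innerA A₁ A₂ i (Phi p₁ r) = ⟪pairR ⟪A₁ i, p₁⟫ (A₂ i), r⟫ := by
  simp only [innerA, Phi, pairQ, pairR, vecOf, PiLp.inner_apply, RCLike.inner_apply,
    conj_trivial, WithLp.equiv_symm_apply, Fin.sum_univ_add, Fin.append_left,
    Fin.append_right, Fin.sum_univ_succ, Fin.cons_zero, Fin.cons_succ, Finset.mul_sum]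
  congr 1
  exact Finset.sum_congr rfl fun j _ => by ring

lemma norm_pairR_sq (a : ℝ) (b : Fin d₂ → ℝ) : ‖pairR a b‖ ^ 2 = a ^ 2 + ‖vecOf b‖ ^ 2 := by
  simp only [EuclideanSpace.real_norm_sq_eq, pairR, vecOf, WithLp.equiv_symm_apply,
    Fin.sum_univ_succ, Fin.cons_zero, Fin.cons_succ]

lemma norm_pairR_le (a : ℝ) (b : Fin d₂ → ℝ) : ‖pairR a b‖ ≤ |a| + ‖vecOf b‖ := by
  refine (pow_le_pow_iff_left₀ (norm_nonneg _) (by positivity) two_ne_zero).mp ?_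
  rw [norm_pairR_sq, add_sq, sq_abs]
  nlinarith [abs_nonneg a, norm_nonneg (vecOf b)]

lemma abs_le_norm_vecOf {m : ℕ} (f : Fin m → ℝ) (i : Fin m) : |f i| ≤ ‖vecOf f‖ :=
  PiLp.norm_apply_le (vecOf f) i

lemma hasGradientAt_smul_sum_const_add_exp_inner {ι E : Type*} [NormedAddCommGroup E]
    [InnerProductSpace ℝ E] [CompleteSpace E] (s : Finset ι) (a : ℝ) (c : ι → ℝ) (w : ι → E)
    (x : E) :
    HasGradientAt (fun y => a * ∑ i ∈ s, (c i + Real.exp ⟪w i, y⟫))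
      (a • ∑ i ∈ s, Real.exp ⟪w i, x⟫ • w i) x := by
  rw [hasGradientAt_iff_hasFDerivAt]
  have hterm : ∀ i ∈ s, HasFDerivAt (fun y : E => c i + Real.exp ⟪w i, y⟫)
      (Real.exp ⟪w i, x⟫ • innerSL ℝ (w i)) x :=
    fun i _ => ((innerSL ℝ (w i)).hasFDerivAt.exp).const_add (c i)
  refine ((HasFDerivAt.fun_sum hterm).const_mul a).congr_fderiv ?_
  ext v
  simp

lemma norm_sum_smul_le_of_norm_le {ι E : Type*} [SeminormedAddCommGroup E] [NormedSpace ℝ E]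
    {s : Finset ι} {e : ι → ℝ} {w : ι → E} {N : ℝ} (he : ∀ i ∈ s, 0 ≤ e i)
    (hw : ∀ i ∈ s, ‖w i‖ ≤ N) :
    ‖∑ i ∈ s, e i • w i‖ ≤ (∑ i ∈ s, e i) * N :=
  calc ‖∑ i ∈ s, e i • w i‖ ≤ ∑ i ∈ s, ‖e i • w i‖ := norm_sum_le _ _
    _ ≤ ∑ i ∈ s, e i * N := Finset.sum_le_sum fun i hi => by
        rw [norm_smul, Real.norm_of_nonneg (he i hi)]
        exact mul_le_mul_of_nonneg_left (hw i hi) (he i hi)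
    _ = (∑ i ∈ s, e i) * N := (Finset.sum_mul _ _ _).symm

theorem grad_r_bound_general
    {n d₁ d₂ : ℕ}
    (c : Fin n → ℝ)
    (A₁ : Fin n → Euc d₁) (A₂ : Fin n → Euc d₂)
    {p₁ : Euc d₁}
    {rstar : Euc (d₂ + 1)} :
    ‖gradient (fun r => Fb c A₁ A₂ r p₁) rstar‖ ≤
      Fbar A₁ A₂ (Phi p₁ rstar) * ‖vecOf (fun i => |⟪A₁ i, p₁⟫| + ‖A₂ i‖)‖ := by
  set w : Fin n → Euc (d₂ + 1) := fun i => pairR ⟪A₁ i, p₁⟫ (A₂ i)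
  have hFb : (fun r => Fb c A₁ A₂ r p₁) =
      fun r => (1 / (n : ℝ)) * ∑ i, (c i + Real.exp ⟪w i, r⟫) := by
    funext r
    simp only [Fb, Ffull, innerA_Phi, w]
  have hFbar : Fbar A₁ A₂ (Phi p₁ rstar) = (1 / (n : ℝ)) * ∑ i, Real.exp ⟪w i, rstar⟫ := by
    simp only [Fbar, innerA_Phi, w]
  have hw : ∀ i ∈ Finset.univ, ‖w i‖ ≤ ‖vecOf (fun i => |⟪A₁ i, p₁⟫| + ‖A₂ i‖)‖ := fun i _ =>
    calc ‖w i‖ ≤ |⟪A₁ i, p₁⟫| + ‖A₂ i‖ := norm_pairR_le _ _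
      _ ≤ _ := (le_abs_self _).trans (abs_le_norm_vecOf (fun i => |⟪A₁ i, p₁⟫| + ‖A₂ i‖) i)
  rw [hFb, (hasGradientAt_smul_sum_const_add_exp_inner _ _ c w rstar).gradient, norm_smul,
    Real.norm_of_nonneg (by positivity), hFbar, mul_assoc]
  gcongr
  exact norm_sum_smul_le_of_norm_le (fun i _ => (Real.exp_pos _).le) hw

/-- **Lemma (bound on `‖∇_r F‖` in the bivariate log-linear setup).**
For `p₁ ∈ Δ^{d₁−1}` and a minimizer `r* = (ρ*, b₂*)` of `F(·, p₁)` over a feasible subset of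
the collapsed simplex `Δ^{d₂}`, with `q*(p₁) = Φ_{p₁}(r*)`, one has
`‖∇_r F(r*, p₁)‖ ≤ F̄(q*(p₁)) · ‖ |A₁ p₁| + α_comp ‖`. -/
theorem grad_r_bound
    {n d₁ d₂ : ℕ} (hn : 0 < n) (hd₁ : 0 < d₁)
    (c : Fin n → ℝ) (hc : ∀ i, 0 < c i)
    (A₁ : Fin n → Euc d₁) (A₂ : Fin n → Euc d₂)
    {p₁ : Euc d₁} (hp₁ : p₁ ∈ probSimplex d₁)
    {S : Set (Euc (d₂ + 1))} (hS : S ⊆ collapsedSimplex d₂)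
    {rstar : Euc (d₂ + 1)} (hrS : rstar ∈ S)
    (hmin : IsMinOn (fun r => Fb c A₁ A₂ r p₁) S rstar) :
    ‖gradient (fun r => Fb c A₁ A₂ r p₁) rstar‖ ≤
      Fbar A₁ A₂ (Phi p₁ rstar) * ‖vecOf (fun i => |⟪A₁ i, p₁⟫| + ‖A₂ i‖)‖ :=
  grad_r_bound_general c A₁ A₂

end
end

section
/- In the bivariate log-linear setup, let p₁, p₁' ∈ Δ^{d₁−1}, set Δ := p₁' − p₁ and p₁^t := t·p₁' + (1−t)·p₁ for t ∈ [0,1]. Let r*(p₁') ∈ Δ^{d₂} be any point and q*(p₁') := Φ_{p₁'}(r*(p₁')). Let a_max := max_{1≤i≤n} ‖A_{i,1}‖₂ and define b_max ∈ ℝ^n by (b_max)_i := max(|⟨A_{i,1}, p₁⟩|, |⟨A_{i,1}, p₁'⟩|). Then for every t ∈ [0,1], the mixed second derivative of F(r, p₁) satisfies ‖∇²_{r,p₁} F(r*(p₁'), p₁^t)‖ ≤ exp(a_max·‖Δ‖) · F̄(q*(p₁')) · ‖(𝟏 + b_max + α_comp) ⊙ α_fix‖, where 𝟏 ∈ ℝ^n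 is the all-ones vector, ⊙ the componentwise product, ‖·‖ on the left the operator norm and on the right the Euclidean norm on ℝ^n (Lemma bounding ‖∇²_{r,p₁} F‖). -/
noncomputable section
open scoped RealInnerProductSpace BigOperators

variable {n d₁ d₂ : ℕ}

/-!
With `b_i(p) := Φ_pᵀ A_i = (⟨A_{i,1}, p⟩, A_{i,2})` we have
`F(r, p) = (1/n) Σ_i (c_i + exp ⟨b_i(p), r⟩)`, so
`∇_r F(r, p) = (1/n) Σ_i exp ⟨b_i(p), r⟩ • b_i(p)`.
As `b_i` is affine in `p` with derivative of norm `‖A_{i,1}‖`, the product rule bounds the `i`-th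
term of the mixed derivative by `exp ⟨b_i(p), r⟩ · ‖A_{i,1}‖ · (1 + ‖r‖ ‖b_i(p)‖)`. On the simplex
`‖r‖ ≤ 1`; moving `p` from `p₁'` to `p₁^t` changes `⟨b_i(p), r⟩` by at most `a_max ‖Δ‖`, and
`|⟨A_{i,1}, p₁^t⟩| ≤ (b_max)_i` by convexity. Bounding each weight by the Euclidean norm of the
weight vector leaves `F̄(q*(p₁'))`.
-/

open Finset

theorem norm_convexCombo_sub_right_le {E : Type*} [SeminormedAddCommGroup E] [NormedSpace ℝ E]
    {t : ℝ} (ht : t ∈ Set.Icc (0 : ℝ) 1) (x y : E) : ‖t • y + (1 - t) • x - y‖ ≤ ‖y - x‖ := by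
  have h : t • y + (1 - t) • x - y = (1 - t) • (x - y) := by module
  rw [h, norm_smul, Real.norm_of_nonneg (by linarith [ht.2]), norm_sub_rev]
  exact mul_le_of_le_one_left (norm_nonneg _) (by linarith [ht.1])

theorem abs_convexCombo_le_max {t x y : ℝ} (ht : t ∈ Set.Icc (0 : ℝ) 1) :
    |t * y + (1 - t) * x| ≤ max |x| |y| := by
  obtain ⟨h0, h1⟩ := ht
  calc |t * y + (1 - t) * x| ≤ t * |y| + (1 - t) * |x| := by
        refine (abs_add_le _ _).trans_eq ?_
        rw [abs_mul, abs_mul, abs_of_nonneg h0, abs_of_nonneg (sub_nonneg.2 h1)]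
    _ ≤ t * max |x| |y| + (1 - t) * max |x| |y| :=
        add_le_add (mul_le_mul_of_nonneg_left (le_max_right _ _) h0)
          (mul_le_mul_of_nonneg_left (le_max_left _ _) (sub_nonneg.2 h1))
    _ = max |x| |y| := by ring

section LogLinear

variable {E F : Type*} [NormedAddCommGroup E] [InnerProductSpace ℝ E]
  [NormedAddCommGroup F] [InnerProductSpace ℝ F] {n : ℕ}

def logLinear (c : Fin n → ℝ) (B : Fin n → F) (r : F) : ℝ :=
  (1 / (n : ℝ)) * ∑ i, (c i + Real.exp ⟪B i, r⟫)

theorem hasGradientAt_logLinear [CompleteSpace F] (c : Fin n → ℝ) (B : Fin n → F) (x : F) :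
    HasGradientAt (logLinear c B) ((1 / (n : ℝ)) • ∑ i, Real.exp ⟪B i, x⟫ • B i) x := by
  have h : HasFDerivAt (logLinear c B)
      ((1 / (n : ℝ)) • ∑ i, Real.exp ⟪B i, x⟫ • innerSL ℝ (B i)) x :=
    (HasFDerivAt.fun_sum fun i _ =>
      ((innerSL ℝ (B i)).hasFDerivAt.exp).const_add (c i)).const_smul (1 / (n : ℝ))
  rw [hasGradientAt_iff_hasFDerivAt]
  refine h.congr_fderiv ?_
  ext v
  simp [mul_sum]

theorem hasFDerivAt_exp_inner_smul {f : E → F} {f' : E →L[ℝ] F} {p : E}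
    (hf : HasFDerivAt f f' p) (r : F) :
    HasFDerivAt (fun q => Real.exp ⟪f q, r⟫ • f q)
      (Real.exp ⟪f p, r⟫ • f' +
        (Real.exp ⟪f p, r⟫ • (innerSL ℝ r).comp f').smulRight (f p)) p := by
  have hinner : HasFDerivAt (fun q => ⟪f q, r⟫) ((innerSL ℝ r).comp f') p := by
    simpa only [Function.comp_def, innerSL_apply_apply, real_inner_comm _ r] using
      (innerSL ℝ r).hasFDerivAt.comp p hf
  exact hinner.exp.smul hf

theorem norm_exp_smul_add_smulRight_le (a : ℝ) (f' : E →L[ℝ] F) (r v : F) :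
    ‖Real.exp a • f' + (Real.exp a • (innerSL ℝ r).comp f').smulRight v‖ ≤
      Real.exp a * ‖f'‖ * (1 + ‖r‖ * ‖v‖) := by
  have hcomp : ‖(innerSL ℝ r).comp f'‖ ≤ ‖r‖ * ‖f'‖ :=
    (ContinuousLinearMap.opNorm_comp_le _ _).trans_eq (by rw [innerSL_apply_norm])
  calc _ ≤ ‖Real.exp a • f'‖ + ‖Real.exp a • (innerSL ℝ r).comp f'‖ * ‖v‖ := by
        rw [← ContinuousLinearMap.norm_smulRight_apply]; exact norm_add_le _ _
    _ ≤ Real.exp a * ‖f'‖ + Real.exp a * (‖r‖ * ‖f'‖) * ‖v‖ := by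
        rw [norm_smul, norm_smul, Real.norm_of_nonneg (Real.exp_pos a).le]
        gcongr
    _ = _ := by ring

theorem norm_fderiv_gradient_logLinear_le [CompleteSpace F] (c : Fin n → ℝ)
    {B : E → Fin n → F} {L : Fin n → E →L[ℝ] F} {p : E}
    (hB : ∀ i, HasFDerivAt (fun q => B q i) (L i) p) (x : F) :
    ‖fderiv ℝ (fun q => gradient (logLinear c (B q)) x) p‖ ≤
      (1 / (n : ℝ)) * ∑ i, Real.exp ⟪B p i, x⟫ * ‖L i‖ * (1 + ‖x‖ * ‖B p i‖) := by
  have hgrad : (fun q => gradient (logLinear c (B q)) x) =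
      fun q => (1 / (n : ℝ)) • ∑ i, Real.exp ⟪B q i, x⟫ • B q i :=
    funext fun q => (hasGradientAt_logLinear c (B q) x).gradient
  rw [hgrad, ((HasFDerivAt.fun_sum fun i _ =>
    hasFDerivAt_exp_inner_smul (hB i) x).fun_const_smul (1 / (n : ℝ))).fderiv, norm_smul,
    Real.norm_of_nonneg (by positivity)]
  gcongr
  exact (norm_sum_le _ _).trans (sum_le_sum fun i _ => norm_exp_smul_add_smulRight_le _ _ _ _)

theorem norm_innerSL_smulRight_single {m : ℕ} (a : E) (j : Fin m) :
    ‖(innerSL ℝ a).smulRight (EuclideanSpace.single j (1 : ℝ))‖ = ‖a‖ := by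
  simp [ContinuousLinearMap.norm_smulRight_apply, innerSL_apply_norm]

end LogLinear

section Collapsed

variable {n d₁ d₂ : ℕ}

theorem norm_le_one_of_mem_probSimplex {m : ℕ} {r : Euc m} (hr : r ∈ probSimplex m) :
    ‖r‖ ≤ 1 := by
  obtain ⟨hnonneg, hsum⟩ := hr
  have hle : ∀ j, r j ≤ 1 := fun j =>
    hsum ▸ single_le_sum (fun k _ => hnonneg k) (mem_univ j)
  have hsq : ‖r‖ ^ 2 ≤ 1 := by
    rw [EuclideanSpace.norm_sq_eq, ← hsum]
    refine sum_le_sum fun j _ => ?_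
    rw [Real.norm_eq_abs, sq_abs]
    nlinarith [hnonneg j, hle j]
  nlinarith [norm_nonneg r]

theorem pairR_eq_add_smul_single (ρ : ℝ) (b : Fin d₂ → ℝ) :
    pairR ρ b = pairR 0 b + ρ • EuclideanSpace.single 0 1 := by
  ext j
  refine Fin.cases ?_ (fun j => ?_) j <;> simp [pairR, vecOf]

theorem norm_pairR_zero (b : Euc d₂) : ‖pairR 0 b.ofLp‖ = ‖b‖ := by
  simp [EuclideanSpace.norm_eq, Fin.sum_univ_succ, pairR, vecOf]

theorem inner_pairR (ρ : ℝ) (b : Fin d₂ → ℝ) (r : Euc (d₂ + 1)) :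
    ⟪pairR ρ b, r⟫ = ρ * r 0 + ∑ j, b j * r j.succ := by
  simp [pairR, vecOf, PiLp.inner_apply, Fin.sum_univ_succ, mul_comm]

theorem inner_pairQ (x u : Fin d₁ → ℝ) (y v : Fin d₂ → ℝ) :
    ⟪pairQ x y, pairQ u v⟫ = ∑ j, x j * u j + ∑ j, y j * v j := by
  simp [pairQ, vecOf, PiLp.inner_apply, Fin.sum_univ_add, mul_comm]

-- `b_i(p) = Φ_pᵀ A_i`
def collapsedRow (A₁ : Fin n → Euc d₁) (A₂ : Fin n → Euc d₂) (p : Euc d₁) (i : Fin n) :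
    Euc (d₂ + 1) :=
  pairR ⟪A₁ i, p⟫ (A₂ i).ofLp

variable (A₁ : Fin n → Euc d₁) (A₂ : Fin n → Euc d₂)

theorem inner_collapsedRow (p : Euc d₁) (r : Euc (d₂ + 1)) (i : Fin n) :
    ⟪collapsedRow A₁ A₂ p i, r⟫ = innerA A₁ A₂ i (Phi p r) := by
  rw [collapsedRow, inner_pairR, innerA, Phi, inner_pairQ, real_inner_comm, PiLp.inner_apply,
    sum_mul]
  simp only [RCLike.inner_apply, conj_trivial]
  exact congrArg (· + _) (sum_congr rfl fun _ _ => by ring)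

theorem Fb_eq_logLinear (c : Fin n → ℝ) (r : Euc (d₂ + 1)) (p : Euc d₁) :
    Fb c A₁ A₂ r p = logLinear c (collapsedRow A₁ A₂ p) r := by
  simp only [Fb, Ffull, logLinear, inner_collapsedRow]

theorem hasFDerivAt_collapsedRow (p : Euc d₁) (i : Fin n) :
    HasFDerivAt (fun q => collapsedRow A₁ A₂ q i)
      ((innerSL ℝ (A₁ i)).smulRight (EuclideanSpace.single 0 1)) p := by
  have hrow : (fun q => collapsedRow A₁ A₂ q i) =
      fun q => pairR 0 (A₂ i).ofLp + ⟪A₁ i, q⟫ • EuclideanSpace.single 0 1 :=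
    funext fun q => pairR_eq_add_smul_single _ _
  rw [hrow]
  exact ((innerSL ℝ (A₁ i)).hasFDerivAt.smul_const _).const_add _

theorem norm_collapsedRow_le (p : Euc d₁) (i : Fin n) :
    ‖collapsedRow A₁ A₂ p i‖ ≤ |⟪A₁ i, p⟫| + ‖A₂ i‖ := by
  rw [collapsedRow, pairR_eq_add_smul_single, add_comm _ ‖A₂ i‖]
  refine (norm_add_le _ _).trans_eq ?_
  simp [norm_pairR_zero, norm_smul]

theorem inner_collapsedRow_le {r : Euc (d₂ + 1)} (hr : ‖r‖ ≤ 1) (p q : Euc d₁) (i : Fin n) :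
    ⟪collapsedRow A₁ A₂ p i, r⟫ ≤ ⟪collapsedRow A₁ A₂ q i, r⟫ + ‖A₁ i‖ * ‖p - q‖ := by
  have hsub : collapsedRow A₁ A₂ p i - collapsedRow A₁ A₂ q i =
      ⟪A₁ i, p - q⟫ • EuclideanSpace.single 0 1 := by
    rw [collapsedRow, collapsedRow, pairR_eq_add_smul_single ⟪A₁ i, p⟫,
      pairR_eq_add_smul_single ⟪A₁ i, q⟫, inner_sub_right, sub_smul]
    abel
  have hnorm : ‖collapsedRow A₁ A₂ p i - collapsedRow A₁ A₂ q i‖ ≤ ‖A₁ i‖ * ‖p - q‖ := by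
    simpa [hsub, norm_smul] using abs_real_inner_le_norm (A₁ i) (p - q)
  have key : ⟪collapsedRow A₁ A₂ p i - collapsedRow A₁ A₂ q i, r⟫ ≤ ‖A₁ i‖ * ‖p - q‖ :=
    calc _ ≤ ‖collapsedRow A₁ A₂ p i - collapsedRow A₁ A₂ q i‖ * ‖r‖ := real_inner_le_norm _ _
      _ ≤ ‖A₁ i‖ * ‖p - q‖ * 1 := by gcongr
      _ = _ := mul_one _
  rw [inner_sub_left] at key
  linarith

theorem exp_inner_collapsedRow_convexCombo_le {r : Euc (d₂ + 1)} (hr : ‖r‖ ≤ 1) {t : ℝ}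
    (ht : t ∈ Set.Icc (0 : ℝ) 1) (p p' : Euc d₁) (i : Fin n) :
    Real.exp ⟪collapsedRow A₁ A₂ (t • p' + (1 - t) • p) i, r⟫ ≤
      Real.exp ((⨆ j, ‖A₁ j‖) * ‖p' - p‖) * Real.exp ⟪collapsedRow A₁ A₂ p' i, r⟫ := by
  have hA₁ : ‖A₁ i‖ ≤ ⨆ j, ‖A₁ j‖ := le_ciSup (f := fun j => ‖A₁ j‖) (Set.finite_range _).bddAbove i
  have hinner := inner_collapsedRow_le A₁ A₂ hr (t • p' + (1 - t) • p) p' i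
  have hdist := mul_le_mul hA₁ (norm_convexCombo_sub_right_le ht p p') (norm_nonneg _)
    ((norm_nonneg _).trans hA₁)
  rw [← Real.exp_add, Real.exp_le_exp]
  linarith

theorem norm_mul_one_add_mul_norm_collapsedRow_convexCombo_le {r : Euc (d₂ + 1)} (hr : ‖r‖ ≤ 1)
    {t : ℝ} (ht : t ∈ Set.Icc (0 : ℝ) 1) (p p' : Euc d₁) (i : Fin n) :
    ‖A₁ i‖ * (1 + ‖r‖ * ‖collapsedRow A₁ A₂ (t • p' + (1 - t) • p) i‖) ≤
      (1 + max |⟪A₁ i, p⟫| |⟪A₁ i, p'⟫| + ‖A₂ i‖) * ‖A₁ i‖ := by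
  have hinner : |⟪A₁ i, t • p' + (1 - t) • p⟫| ≤ max |⟪A₁ i, p⟫| |⟪A₁ i, p'⟫| := by
    rw [inner_add_right, real_inner_smul_right, real_inner_smul_right]
    exact abs_convexCombo_le_max ht
  calc ‖A₁ i‖ * (1 + ‖r‖ * ‖collapsedRow A₁ A₂ (t • p' + (1 - t) • p) i‖)
      ≤ ‖A₁ i‖ * (1 + 1 * (max |⟪A₁ i, p⟫| |⟪A₁ i, p'⟫| + ‖A₂ i‖)) := by
        gcongr
        exact (norm_collapsedRow_le A₁ A₂ _ i).trans (by gcongr)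
    _ = (1 + max |⟪A₁ i, p⟫| |⟪A₁ i, p'⟫| + ‖A₂ i‖) * ‖A₁ i‖ := by ring

theorem mul_sum_exp_innerA_mul_le (q : Euc (d₁ + d₂)) (w : Fin n → ℝ) :
    (1 / (n : ℝ)) * ∑ i, Real.exp (innerA A₁ A₂ i q) * w i ≤ Fbar A₁ A₂ q * ‖vecOf w‖ := by
  rw [Fbar, mul_assoc, sum_mul]
  gcongr with i
  exact (le_abs_self _).trans (PiLp.norm_apply_le (vecOf w) i)

end Collapsed

theorem mixed_second_derivative_bound_general
    {n d₁ d₂ : ℕ}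
    (c : Fin n → ℝ)
    (A₁ : Fin n → Euc d₁) (A₂ : Fin n → Euc d₂)
    {p₁ p₁' : Euc d₁}
    {rstar' : Euc (d₂ + 1)} (hr : rstar' ∈ collapsedSimplex d₂) :
    ∀ t ∈ Set.Icc (0 : ℝ) 1,
      ‖fderiv ℝ (fun p => gradient (fun r => Fb c A₁ A₂ r p) rstar')
          (t • p₁' + (1 - t) • p₁)‖ ≤
        Real.exp ((⨆ i, ‖A₁ i‖) * ‖p₁' - p₁‖) * Fbar A₁ A₂ (Phi p₁' rstar') *
          ‖vecOf (fun i =>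
            (1 + max |⟪A₁ i, p₁⟫| |⟪A₁ i, p₁'⟫| + ‖A₂ i‖) * ‖A₁ i‖)‖ := by
  intro t ht
  set pt := t • p₁' + (1 - t) • p₁
  set E := Real.exp ((⨆ i, ‖A₁ i‖) * ‖p₁' - p₁‖)
  set w : Fin n → ℝ := fun i => (1 + max |⟪A₁ i, p₁⟫| |⟪A₁ i, p₁'⟫| + ‖A₂ i‖) * ‖A₁ i‖
  have hr1 : ‖rstar'‖ ≤ 1 := norm_le_one_of_mem_probSimplex hr
  simp only [Fb_eq_logLinear]
  calc _ ≤ (1 / (n : ℝ)) * ∑ i, Real.exp ⟪collapsedRow A₁ A₂ pt i, rstar'⟫ *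
          ‖(innerSL ℝ (A₁ i)).smulRight (EuclideanSpace.single 0 1)‖ *
          (1 + ‖rstar'‖ * ‖collapsedRow A₁ A₂ pt i‖) :=
        norm_fderiv_gradient_logLinear_le c (hasFDerivAt_collapsedRow A₁ A₂ pt) rstar'
    _ ≤ (1 / (n : ℝ)) * ∑ i, E * Real.exp (innerA A₁ A₂ i (Phi p₁' rstar')) * w i := by
        refine mul_le_mul_of_nonneg_left (sum_le_sum fun i _ => ?_) (by positivity)
        rw [norm_innerSL_smulRight_single, mul_assoc, ← inner_collapsedRow]
        exact mul_le_mul (exp_inner_collapsedRow_convexCombo_le A₁ A₂ hr1 ht p₁ p₁' i)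
          (norm_mul_one_add_mul_norm_collapsedRow_convexCombo_le A₁ A₂ hr1 ht p₁ p₁' i)
          (by positivity) (by positivity)
    _ = E * ((1 / (n : ℝ)) * ∑ i, Real.exp (innerA A₁ A₂ i (Phi p₁' rstar')) * w i) := by
        simp only [mul_sum]
        exact sum_congr rfl fun i _ => by ring
    _ ≤ E * (Fbar A₁ A₂ (Phi p₁' rstar') * ‖vecOf w‖) :=
        mul_le_mul_of_nonneg_left (mul_sum_exp_innerA_mul_le A₁ A₂ _ w) (Real.exp_pos _).le
    _ = _ := (mul_assoc _ _ _).symm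

/-- **Lemma (bound on the mixed second derivative `‖∇²_{r,p₁} F‖`).**
For `p₁, p₁' ∈ Δ^{d₁−1}`, `Δ = p₁' − p₁`, `p₁^t = t·p₁' + (1−t)·p₁`, any `r*(p₁') ∈ Δ^{d₂}`
with `q*(p₁') = Φ_{p₁'}(r*(p₁'))`, `a_max = max_i ‖A_{i,1}‖` and
`(b_max)_i = max(|⟨A_{i,1},p₁⟩|, |⟨A_{i,1},p₁'⟩|)`, for every `t ∈ [0,1]`,
`‖∇²_{r,p₁} F(r*(p₁'), p₁^t)‖ ≤ exp(a_max·‖Δ‖)·F̄(q*(p₁'))·‖(𝟏 + b_max + α_comp) ⊙ α_fix‖`. -/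
theorem mixed_second_derivative_bound
    {n d₁ d₂ : ℕ} (hn : 0 < n) (hd₁ : 0 < d₁)
    (c : Fin n → ℝ) (hc : ∀ i, 0 < c i)
    (A₁ : Fin n → Euc d₁) (A₂ : Fin n → Euc d₂)
    {p₁ p₁' : Euc d₁} (hp₁ : p₁ ∈ probSimplex d₁) (hp₁' : p₁' ∈ probSimplex d₁)
    {rstar' : Euc (d₂ + 1)} (hr : rstar' ∈ collapsedSimplex d₂) :
    ∀ t ∈ Set.Icc (0 : ℝ) 1,
      ‖fderiv ℝ (fun p => gradient (fun r => Fb c A₁ A₂ r p) rstar')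
          (t • p₁' + (1 - t) • p₁)‖ ≤
        Real.exp ((⨆ i, ‖A₁ i‖) * ‖p₁' - p₁‖) * Fbar A₁ A₂ (Phi p₁' rstar') *
          ‖vecOf (fun i =>
            (1 + max |⟪A₁ i, p₁⟫| |⟪A₁ i, p₁'⟫| + ‖A₂ i‖) * ‖A₁ i‖)‖ :=
  mixed_second_derivative_bound_general c A₁ A₂ hr
end
end
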